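/- Every nonnegative n×n matrix A with λ(A) > 0 admits a positive vector x such that, for X = diag(x), the scaled matrix X⁻¹AX is strictly visualized: entries on critical edges equal λ(A) and all other entries are strictly less than λ(A). -/

import Mathlib

open Finset

/-- Max-times matrix product: `(A ⊗ B) i j = max_k (A i k * B k j)`. -/
noncomputable def mProd {n : ℕ} (A B : Matrix (Fin n) (Fin n) NNReal) :
    Matrix (Fin n) (Fin n) NNReal :=
  fun i j => univ.sup fun k => A i k * B k j

/-- Max-algebraic matrix powers, `mPow A 0 = I`. -/
noncomputable def mPow {n : ℕ} (A : Matrix (Fin n) (Fin n) NNReal) :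
    ℕ → Matrix (Fin n) (Fin n) NNReal
  | 0 => fun i j => if i = j then 1 else 0
  | k + 1 => mProd (mPow A k) A

/-- Kleene star `A* = I ⊕ A ⊕ ... ⊕ A^{n-1}` in max algebra. -/
noncomputable def klStar {n : ℕ} (A : Matrix (Fin n) (Fin n) NNReal) :
    Matrix (Fin n) (Fin n) NNReal :=
  fun i j => (Finset.range n).sup fun k => mPow A k i j

/-- Partial "sums" `I ⊕ A ⊕ ... ⊕ A^m` of the Kleene star series. -/
noncomputable def kPartial {n : ℕ} (A : Matrix (Fin n) (Fin n) NNReal) (m : ℕ) :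
    Matrix (Fin n) (Fin n) NNReal :=
  fun i j => (Finset.range (m + 1)).sup fun k => mPow A k i j

/-- The weight of the cycle given by the list `l` (with wrap-around edge). -/
def cycleWeight {n : ℕ} (A : Matrix (Fin n) (Fin n) NNReal) (l : List (Fin n)) : NNReal :=
  ((l.zip (l.rotate 1)).map fun p => A p.1 p.2).prod

/-- The geometric mean of a cycle: `w(σ,A)^{1/k}`. -/
noncomputable def cycleMean {n : ℕ} (A : Matrix (Fin n) (Fin n) NNReal) (l : List (Fin n)) :
    NNReal :=
  (cycleWeight A l) ^ ((l.length : ℝ)⁻¹)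

/-- The maximum cycle geometric mean `λ(A)`. -/
noncomputable def maxCycleMean {n : ℕ} (A : Matrix (Fin n) (Fin n) NNReal) : NNReal :=
  sSup {x | ∃ l : List (Fin n), l ≠ [] ∧ x = cycleMean A l}

/-- `(i,j)` is a critical edge: it lies on a cycle attaining `λ(A)`. -/
def criticalEdge {n : ℕ} (A : Matrix (Fin n) (Fin n) NNReal) (i j : Fin n) : Prop :=
  ∃ l : List (Fin n), l ≠ [] ∧ cycleMean A l = maxCycleMean A ∧ (i, j) ∈ l.zip (l.rotate 1)

/-- Max-algebraic matrix-vector product. -/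
noncomputable def mVec {n : ℕ} (A : Matrix (Fin n) (Fin n) NNReal) (x : Fin n → NNReal) :
    Fin n → NNReal :=
  fun i => univ.sup fun j => A i j * x j

/-!
Scale `B = λ(A)⁻¹ A`, so that every cycle of `B` has weight at most `1`. Then removing cycles from
a walk never decreases its weight, so the Kleene star `S = B*` bounds the weight of every walk and
is attained by one of them; in particular `S` is submultiplicative and `B S ≤ S`. Put
`x i = ∑ k, S i k`. Termwise, `B i j * x j ≤ x i`, and equality forces `B i j * S j i = S i i ≥ 1`:
the edge `(i, j)` closes a heaviest walk from `j` to `i` into a cycle of weight `1`, i.e. a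
critical cycle of `A`. Conversely, on a critical edge `B i j * S j i = 1`, so
`S i k ≤ B i j * S j i * S i k ≤ B i j * S j k` for every `k`.
-/

lemma List.exists_eq_append_cons_append_cons_of_not_nodup {α : Type*} {l : List α}
    (h : ¬ l.Nodup) : ∃ v s t u, l = s ++ v :: t ++ v :: u := by
  induction l with
  | nil => exact absurd List.nodup_nil h
  | cons a l ih =>
    by_cases ha : a ∈ l
    · obtain ⟨t, u, rfl⟩ := List.append_of_mem ha
      exact ⟨a, [], t, u, rfl⟩
    · obtain ⟨v, s, t, u, rfl⟩ := ih fun hl => h (List.nodup_cons.2 ⟨ha, hl⟩)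
      exact ⟨v, a :: s, t, u, rfl⟩

section

variable {n : ℕ}

/-- A walk is encoded by its list of vertices; it goes from `i` to `j` when `p.head? = some i`
and `p.getLast? = some j`. -/
def walkWeight (B : Matrix (Fin n) (Fin n) NNReal) (p : List (Fin n)) : NNReal :=
  ((p.dropLast.zip p.tail).map fun e => B e.1 e.2).prod

def IsUnitCycleEdge (B : Matrix (Fin n) (Fin n) NNReal) (i j : Fin n) : Prop :=
  ∃ l : List (Fin n), l ≠ [] ∧ cycleWeight B l = 1 ∧ (i, j) ∈ l.zip (l.rotate 1)

section Walks

variable (B : Matrix (Fin n) (Fin n) NNReal)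

@[simp]
lemma walkWeight_singleton (a : Fin n) : walkWeight B [a] = 1 := rfl

@[simp]
lemma walkWeight_cons_cons (a b : Fin n) (t : List (Fin n)) :
    walkWeight B (a :: b :: t) = B a b * walkWeight B (b :: t) := by
  cases t <;> simp [walkWeight]

lemma walkWeight_append_cons (u : List (Fin n)) (a : Fin n) (w : List (Fin n)) :
    walkWeight B (u ++ a :: w) = walkWeight B (u ++ [a]) * walkWeight B (a :: w) := by
  induction u with
  | nil => simp
  | cons b u ih => cases u <;> simp_all [mul_assoc]

lemma walkWeight_concat {u : List (Fin n)} {a : Fin n} (hu : u.getLast? = some a) (j : Fin n) :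
    walkWeight B (u ++ [j]) = walkWeight B u * B a j := by
  obtain ⟨u, rfl⟩ := List.getLast?_eq_some_iff.1 hu
  rw [List.append_assoc, List.singleton_append, walkWeight_append_cons]
  simp

lemma cycleWeight_cons (a : Fin n) (t : List (Fin n)) :
    cycleWeight B (a :: t) = walkWeight B (a :: t ++ [a]) := by
  rw [cycleWeight, walkWeight, List.cons_append, List.dropLast_cons_of_ne_nil (by simp),
    List.dropLast_concat]
  simp

lemma cycleWeight_eq_walkWeight_mul {p : List (Fin n)} {i j : Fin n}
    (hj : p.head? = some j) (hi : p.getLast? = some i) :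
    cycleWeight B p = walkWeight B p * B i j := by
  obtain ⟨t, rfl⟩ := List.head?_eq_some_iff.1 hj
  rw [cycleWeight_cons, walkWeight_concat B hi]

lemma cycleWeight_rotate (l : List (Fin n)) (m : ℕ) :
    cycleWeight B (l.rotate m) = cycleWeight B l := by
  rw [cycleWeight, List.rotate_rotate, add_comm, ← List.rotate_rotate, List.zip_eq_zipWith,
    ← List.zipWith_rotate_distrib _ _ _ _ (by simp), List.map_rotate,
    (List.rotate_perm _ _).prod_eq, ← List.zip_eq_zipWith, cycleWeight]

end Walks

lemma mem_zip_rotate_one {p : List (Fin n)} {i j : Fin n}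
    (hj : p.head? = some j) (hi : p.getLast? = some i) : (i, j) ∈ p.zip (p.rotate 1) := by
  obtain ⟨t, rfl⟩ := List.head?_eq_some_iff.1 hj
  obtain ⟨u, hu⟩ := List.getLast?_eq_some_iff.1 hi
  have hlen : u.length = t.length := by simpa using congrArg List.length hu.symm
  rw [List.rotate_cons_succ, List.rotate_zero, hu, List.zip_append hlen]
  simp

lemma exists_rotate_of_mem_zip_rotate_one {l : List (Fin n)} {i j : Fin n}
    (h : (i, j) ∈ l.zip (l.rotate 1)) :
    ∃ m, (l.rotate m).head? = some j ∧ (l.rotate m).getLast? = some i := by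
  obtain ⟨k, hk, hkij⟩ := List.mem_iff_getElem.1 h
  simp only [List.getElem_zip, List.getElem_rotate, Prod.mk.injEq] at hkij
  have hk' : k < l.length := by simpa using hk
  refine ⟨k + 1, ?_, ?_⟩
  · rw [List.head?_eq_getElem?, List.getElem?_rotate (by omega)]
    simp [← hkij.2]
  · rw [List.getLast?_eq_getElem?, List.getElem?_rotate (by simp; omega)]
    have : (l.length - 1 + (k + 1)) % l.length = k := by
      rw [show l.length - 1 + (k + 1) = k + l.length by omega, Nat.add_mod_right,
        Nat.mod_eq_of_lt hk']
    simp [this, ← hkij.1]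

section KleeneStar

variable (B : Matrix (Fin n) (Fin n) NNReal)

lemma walkWeight_le_mPow {m : ℕ} {p : List (Fin n)} {i j : Fin n} (hp : p.length = m + 1)
    (hi : p.head? = some i) (hj : p.getLast? = some j) : walkWeight B p ≤ mPow B m i j := by
  induction m generalizing p j with
  | zero =>
    obtain ⟨a, rfl⟩ := List.length_eq_one_iff.1 hp
    obtain ⟨rfl, rfl⟩ : a = i ∧ a = j := by simp_all
    simp [mPow]
  | succ m ih =>
    obtain ⟨u, rfl⟩ := List.getLast?_eq_some_iff.1 hj
    have hu : u ≠ [] := by rintro rfl; simp at hp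
    have hk := List.getLast?_eq_some_getLast hu
    set k := u.getLast hu
    rw [walkWeight_concat B hk]
    calc walkWeight B u * B k j
        ≤ mPow B m i k * B k j := by
          gcongr
          exact ih (by simpa using hp) (by simpa [List.head?_append_of_ne_nil _ hu] using hi) hk
      _ ≤ mPow B (m + 1) i j :=
          Finset.le_sup (f := fun k => mPow B m i k * B k j) (Finset.mem_univ k)

lemma exists_walkWeight_eq_mPow {m : ℕ} {i j : Fin n} (h : mPow B m i j ≠ 0) :
    ∃ p : List (Fin n), p.length = m + 1 ∧ p.head? = some i ∧ p.getLast? = some j ∧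
      walkWeight B p = mPow B m i j := by
  induction m generalizing j with
  | zero =>
    obtain rfl : i = j := by by_contra hij; simp [mPow, hij] at h
    exact ⟨[i], by simp, by simp, by simp, by simp [mPow]⟩
  | succ m ih =>
    obtain ⟨k, -, hk⟩ := Finset.exists_mem_eq_sup Finset.univ ⟨i, Finset.mem_univ i⟩
      (fun k => mPow B m i k * B k j)
    change mPow B (m + 1) i j = mPow B m i k * B k j at hk
    obtain ⟨p, hp, hi, hk', hpk⟩ := ih (j := k) (fun h0 => h (by simp [hk, h0]))
    have hne : p ≠ [] := by rintro rfl; simp at hp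
    refine ⟨p ++ [j], by simp [hp], by simp [List.head?_append_of_ne_nil _ hne, hi], by simp, ?_⟩
    rw [walkWeight_concat B hk', hpk, hk]

lemma one_le_klStar_self (i : Fin n) : 1 ≤ klStar B i i := by
  have h0 : mPow B 0 i i = 1 := by simp [mPow]
  exact h0 ▸ Finset.le_sup (f := fun k => mPow B k i i) (Finset.mem_range.2 i.pos)

lemma exists_walkWeight_eq_klStar {i j : Fin n} (h : klStar B i j ≠ 0) :
    ∃ p : List (Fin n), p.head? = some i ∧ p.getLast? = some j ∧ walkWeight B p = klStar B i j := by
  obtain ⟨m, -, hm⟩ := Finset.exists_mem_eq_sup (Finset.range n) ⟨0, Finset.mem_range.2 i.pos⟩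
    (fun k => mPow B k i j)
  change klStar B i j = mPow B m i j at hm
  obtain ⟨p, -, hi, hj, hp⟩ := exists_walkWeight_eq_mPow B (hm ▸ h)
  exact ⟨p, hi, hj, hp.trans hm.symm⟩

variable {B} (hB : ∀ l : List (Fin n), l ≠ [] → cycleWeight B l ≤ 1)
include hB

lemma walkWeight_le_klStar {p : List (Fin n)} {i j : Fin n} (hi : p.head? = some i)
    (hj : p.getLast? = some j) : walkWeight B p ≤ klStar B i j := by
  induction hlen : p.length using Nat.strong_induction_on generalizing p with
  | _ m ih =>
    by_cases hp : p.Nodup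
    · have hle : p.length ≤ n := by simpa using hp.length_le_card
      have hpos : 0 < p.length := List.length_pos_iff.2 (by rintro rfl; simp at hi)
      exact (walkWeight_le_mPow B (by omega : p.length = (p.length - 1) + 1) hi hj).trans
        (Finset.le_sup (f := fun k => mPow B k i j) (Finset.mem_range.2 (by omega)))
    · obtain ⟨v, s, t, u, rfl⟩ := List.exists_eq_append_cons_append_cons_of_not_nodup hp
      have hcycle : walkWeight B (v :: t ++ [v]) ≤ 1 :=
        cycleWeight_cons B v t ▸ hB _ (List.cons_ne_nil _ _)
      calc walkWeight B (s ++ v :: t ++ v :: u)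
          = walkWeight B (s ++ [v]) * walkWeight B (v :: t ++ [v]) * walkWeight B (v :: u) := by
            rw [List.append_assoc, List.cons_append, walkWeight_append_cons B s v,
              ← List.cons_append, walkWeight_append_cons B (v :: t) v u, mul_assoc]
        _ ≤ walkWeight B (s ++ [v]) * walkWeight B (v :: u) := by
            gcongr
            exact mul_le_of_le_one_right' hcycle
        _ = walkWeight B (s ++ v :: u) := (walkWeight_append_cons B s v u).symm
        _ ≤ klStar B i j := by
            refine ih _ ?_ ?_ ?_ rfl
            · simp at hlen ⊢; omega
            · cases s <;> simpa using hi
            · rwa [List.getLast?_append_cons] at hj ⊢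

lemma klStar_mul_klStar_le (i j k : Fin n) : klStar B i j * klStar B j k ≤ klStar B i k := by
  rcases eq_or_ne (klStar B i j) 0 with h | h
  · simp [h]
  rcases eq_or_ne (klStar B j k) 0 with h' | h'
  · simp [h']
  obtain ⟨p, hpi, hpj, hp⟩ := exists_walkWeight_eq_klStar B h
  obtain ⟨q, hqj, hqk, hq⟩ := exists_walkWeight_eq_klStar B h'
  obtain ⟨p, rfl⟩ := List.getLast?_eq_some_iff.1 hpj
  obtain ⟨q, rfl⟩ := List.head?_eq_some_iff.1 hqj
  rw [← hp, ← hq, ← walkWeight_append_cons]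
  refine walkWeight_le_klStar hB ?_ (by rwa [List.getLast?_append_cons])
  cases p <;> simpa using hpi

lemma le_klStar (i j : Fin n) : B i j ≤ klStar B i j := by
  simpa using walkWeight_le_klStar hB (p := [i, j]) rfl rfl

lemma mul_klStar_le_klStar (i j k : Fin n) : B i j * klStar B j k ≤ klStar B i k :=
  (mul_le_mul_left (le_klStar hB i j) _).trans (klStar_mul_klStar_le hB i j k)

lemma one_le_mul_klStar_iff (i j : Fin n) : 1 ≤ B i j * klStar B j i ↔ IsUnitCycleEdge B i j := by
  constructor
  · intro h
    obtain ⟨p, hj, hi, hp⟩ := exists_walkWeight_eq_klStar B (i := j) (j := i)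
      (by rintro h0; simp [h0] at h)
    refine ⟨p, by rintro rfl; simp at hj, le_antisymm (hB _ (by rintro rfl; simp at hj)) ?_,
      mem_zip_rotate_one hj hi⟩
    rwa [cycleWeight_eq_walkWeight_mul B hj hi, hp, mul_comm]
  · rintro ⟨l, -, hw, hij⟩
    obtain ⟨m, hj, hi⟩ := exists_rotate_of_mem_zip_rotate_one hij
    calc 1 = walkWeight B (l.rotate m) * B i j := by
          rw [← cycleWeight_eq_walkWeight_mul B hj hi, cycleWeight_rotate, hw]
      _ ≤ klStar B j i * B i j := by gcongr; exact walkWeight_le_klStar hB hj hi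
      _ = B i j * klStar B j i := mul_comm _ _

theorem exists_strict_visualization_of_cycleWeight_le_one :
    ∃ x : Fin n → NNReal, (∀ i, 0 < x i) ∧
      ∀ i j, B i j * x j ≤ x i ∧ (B i j * x j = x i ↔ IsUnitCycleEdge B i j) := by
  refine ⟨fun i => ∑ k, klStar B i k, fun i => ?_, fun i j => ?_⟩
  · exact one_pos.trans_le <| (one_le_klStar_self B i).trans <|
      Finset.single_le_sum (fun _ _ => zero_le) (mem_univ i)
  have hle : ∀ k, B i j * klStar B j k ≤ klStar B i k := mul_klStar_le_klStar hB i j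
  simp only [Finset.mul_sum]
  refine ⟨Finset.sum_le_sum fun k _ => hle k, ?_⟩
  rw [Finset.sum_eq_sum_iff_of_le fun k _ => hle k, ← one_le_mul_klStar_iff hB]
  constructor
  · intro h
    exact (h i (mem_univ i)).symm ▸ one_le_klStar_self B i
  · intro h k _
    refine le_antisymm (hle k) ?_
    calc klStar B i k ≤ B i j * klStar B j i * klStar B i k := le_mul_of_one_le_left' h
      _ ≤ B i j * klStar B j k := by
          rw [mul_assoc]; gcongr; exact klStar_mul_klStar_le hB j i k

end KleeneStar

section CycleMean

variable (A : Matrix (Fin n) (Fin n) NNReal)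

lemma cycleWeight_const_mul (c : NNReal) (l : List (Fin n)) :
    cycleWeight (fun i j => c * A i j) l = c ^ l.length * cycleWeight A l := by
  simp [cycleWeight, List.prod_map_mul]

lemma cycleMean_le_iff {l : List (Fin n)} (hl : l ≠ []) {c : NNReal} :
    cycleMean A l ≤ c ↔ cycleWeight A l ≤ c ^ l.length := by
  rw [cycleMean, NNReal.rpow_inv_le_iff (by simpa using List.length_pos_iff.2 hl),
    NNReal.rpow_natCast]

lemma cycleMean_eq_iff {l : List (Fin n)} (hl : l ≠ []) {c : NNReal} :
    cycleMean A l = c ↔ cycleWeight A l = c ^ l.length := by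
  rw [cycleMean, NNReal.rpow_inv_eq_iff (by simpa using hl), NNReal.rpow_natCast]

lemma bddAbove_cycleMeans (h : 0 < maxCycleMean A) :
    BddAbove {x | ∃ l : List (Fin n), l ≠ [] ∧ x = cycleMean A l} := by
  -- an unbounded set of `NNReal` has junk supremum `sSup ∅ = 0`
  by_contra hb
  rw [maxCycleMean, csSup_of_not_bddAbove hb, csSup_empty] at h
  exact h.ne' rfl

lemma cycleWeight_le_maxCycleMean_pow (h : 0 < maxCycleMean A) {l : List (Fin n)} (hl : l ≠ []) :
    cycleWeight A l ≤ maxCycleMean A ^ l.length :=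
  (cycleMean_le_iff A hl).1 (le_csSup (bddAbove_cycleMeans A h) ⟨l, hl, rfl⟩)

lemma cycleWeight_inv_mul_le_one (h : 0 < maxCycleMean A) {l : List (Fin n)} (hl : l ≠ []) :
    cycleWeight (fun i j => (maxCycleMean A)⁻¹ * A i j) l ≤ 1 := by
  rw [cycleWeight_const_mul, inv_pow, inv_mul_le_one₀ (pow_pos h _)]
  exact cycleWeight_le_maxCycleMean_pow A h hl

lemma criticalEdge_iff_isUnitCycleEdge (h : 0 < maxCycleMean A) (i j : Fin n) :
    criticalEdge A i j ↔ IsUnitCycleEdge (fun i j => (maxCycleMean A)⁻¹ * A i j) i j := by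
  refine exists_congr fun l => and_congr_right fun hl => and_congr_left' ?_
  rw [cycleMean_eq_iff A hl, cycleWeight_const_mul, inv_pow, inv_mul_eq_one₀ (pow_pos h _).ne',
    eq_comm]

end CycleMean

end

/-- every `A` with `λ(A) > 0` admits a strict visualization
scaling by a positive vector. -/
theorem stmt_17 {n : ℕ} (A : Matrix (Fin n) (Fin n) NNReal)
    (hlam : 0 < maxCycleMean A) :
    ∃ x : Fin n → NNReal, (∀ i, 0 < x i) ∧
      (∀ i j, criticalEdge A i j → (x i)⁻¹ * A i j * x j = maxCycleMean A) ∧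
      (∀ i j, ¬ criticalEdge A i j → (x i)⁻¹ * A i j * x j < maxCycleMean A) := by
  obtain ⟨x, hx, hvis⟩ := exists_strict_visualization_of_cycleWeight_le_one
    fun _ => cycleWeight_inv_mul_le_one A hlam
  have hscaled : ∀ i j, (x i)⁻¹ * A i j * x j =
      maxCycleMean A * ((maxCycleMean A)⁻¹ * A i j * x j / x i) := by
    intro i j
    field_simp
  refine ⟨x, hx, fun i j hij => ?_, fun i j hij => ?_⟩
  · rw [hscaled, (hvis i j).2.2 ((criticalEdge_iff_isUnitCycleEdge A hlam i j).1 hij),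
      div_self (hx i).ne', mul_one]
  · rw [hscaled]
    refine mul_lt_of_lt_one_right hlam ((div_lt_one (hx i)).2 ((hvis i j).1.lt_of_ne ?_))
    rwa [Ne, (hvis i j).2, ← criticalEdge_iff_isUnitCycleEdge A hlam]
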